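/- Let q ≥ 1 and w ∈ ℝ^q with wᵢ = 2^{i−1}. The set { wᵀBw : B ∈ ℝ^{q×q} positive semidefinite with unit diagonal } equals the closed interval [1, (2^q − 1)²]. -/

import Mathlib

/-!
A positive semidefinite matrix with unit diagonal is the Gram matrix of unit vectors `vᵢ`, so
`wᵀBw = ‖∑ wᵢ vᵢ‖²`. The triangle inequality bounds this norm above by `∑ |wᵢ| = 2^q - 1` and
below by `|w_q| - ∑_{i<q} |wᵢ| = 1`. Both bounds are attained by rank-one matrices `s sᵀ` with
`s ∈ {±1}^q`, and the set of values is an interval, being a linear image of the convex set of such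
matrices (the elliptope).
-/

open Matrix Finset
open scoped ComplexOrder

theorem Matrix.PosSemidef.exists_eq_gram {n 𝕜 : Type*} [Fintype n] [RCLike 𝕜]
    {B : Matrix n n 𝕜} (hB : B.PosSemidef) : ∃ v : n → EuclideanSpace 𝕜 n, B = gram 𝕜 v := by
  classical
  obtain ⟨A, rfl⟩ : ∃ A : Matrix n n 𝕜, B = star A * A := by
    open scoped MatrixOrder Matrix.Norms.L2Operator in
    exact CStarAlgebra.nonneg_iff_eq_star_mul_self.mp hB.nonneg
  refine ⟨fun j => WithLp.toLp 2 (fun k => A k j), ?_⟩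
  ext i j
  simp [mul_apply, PiLp.inner_apply, mul_comm]

section UnitVectors

variable {ι E : Type*} [SeminormedAddCommGroup E] [NormedSpace ℝ E] {v : ι → E}

theorem norm_sum_smul_le_sum_abs (hv : ∀ i, ‖v i‖ = 1) (s : Finset ι) (w : ι → ℝ) :
    ‖∑ i ∈ s, w i • v i‖ ≤ ∑ i ∈ s, |w i| :=
  (norm_sum_le _ _).trans_eq <| by simp [norm_smul, hv]

theorem two_mul_abs_sub_sum_abs_le_norm_sum_smul [Fintype ι] [DecidableEq ι]
    (hv : ∀ i, ‖v i‖ = 1) (w : ι → ℝ) (l : ι) :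
    2 * |w l| - ∑ i, |w i| ≤ ‖∑ i, w i • v i‖ := by
  rw [← add_sum_erase _ _ (mem_univ l), ← add_sum_erase _ _ (mem_univ l)]
  have hl : ‖w l • v l‖ = |w l| := by rw [norm_smul, hv, mul_one, Real.norm_eq_abs]
  linarith [norm_le_add_norm_add (w l • v l) (∑ i ∈ univ.erase l, w i • v i),
    norm_sum_smul_le_sum_abs hv (univ.erase l) w]

end UnitVectors

namespace Matrix

def elliptope (n : Type*) : Set (Matrix n n ℝ) :=
  {B | B.PosSemidef ∧ ∀ i, B i i = 1}

variable {n : Type*}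

theorem convex_elliptope : Convex ℝ (elliptope n) := by
  rintro B ⟨hB, hBd⟩ C ⟨hC, hCd⟩ a b ha hb hab
  refine ⟨(hB.smul ha).add (hC.smul hb), fun i => ?_⟩
  simp [hBd, hCd, hab]

variable [Fintype n] {B : Matrix n n ℝ}

theorem dotProduct_vecMulVec_self_mulVec (s w : n → ℝ) :
    w ⬝ᵥ vecMulVec s s *ᵥ w = (s ⬝ᵥ w) ^ 2 := by
  rw [vecMulVec_mulVec, op_smul_eq_smul, dotProduct_smul, smul_eq_mul, dotProduct_comm, sq]

theorem convex_image_elliptope (w : n → ℝ) :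
    Convex ℝ ((fun B : Matrix n n ℝ => w ⬝ᵥ B *ᵥ w) '' elliptope n) :=
  convex_elliptope.is_linear_image
    ⟨fun B C => by simp [add_mulVec], fun c B => by simp [smul_mulVec]⟩

theorem sq_dotProduct_mem_image_elliptope {s : n → ℝ} (hs : ∀ i, s i * s i = 1) (w : n → ℝ) :
    (s ⬝ᵥ w) ^ 2 ∈ (fun B : Matrix n n ℝ => w ⬝ᵥ B *ᵥ w) '' elliptope n :=
  ⟨vecMulVec s s, ⟨posSemidef_vecMulVec_self_star s, hs⟩, dotProduct_vecMulVec_self_mulVec s w⟩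

theorem exists_unit_gram_of_mem_elliptope (hB : B ∈ elliptope n) :
    ∃ v : n → EuclideanSpace ℝ n, (∀ i, ‖v i‖ = 1) ∧
      ∀ w, w ⬝ᵥ B *ᵥ w = ‖∑ i, w i • v i‖ ^ 2 := by
  obtain ⟨v, rfl⟩ := hB.1.exists_eq_gram
  refine ⟨v, fun i => ?_, fun w => ?_⟩
  · have h := hB.2 i
    rwa [gram_apply, real_inner_self_eq_norm_sq,
      pow_eq_one_iff_of_nonneg (norm_nonneg _) two_ne_zero] at h
  · simpa [real_inner_self_eq_norm_sq] using star_dotProduct_gram_mulVec (𝕜 := ℝ) v w w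

theorem dotProduct_mulVec_le_of_mem_elliptope (hB : B ∈ elliptope n) (w : n → ℝ) :
    w ⬝ᵥ B *ᵥ w ≤ (∑ i, |w i|) ^ 2 := by
  obtain ⟨v, hv, hBv⟩ := exists_unit_gram_of_mem_elliptope hB
  rw [hBv]
  exact pow_le_pow_left₀ (norm_nonneg _) (norm_sum_smul_le_sum_abs hv univ w) 2

theorem le_dotProduct_mulVec_of_mem_elliptope [DecidableEq n] (hB : B ∈ elliptope n)
    (w : n → ℝ) (l : n) (hl : ∑ i, |w i| ≤ 2 * |w l|) :
    (2 * |w l| - ∑ i, |w i|) ^ 2 ≤ w ⬝ᵥ B *ᵥ w := by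
  obtain ⟨v, hv, hBv⟩ := exists_unit_gram_of_mem_elliptope hB
  rw [hBv]
  exact pow_le_pow_left₀ (by linarith) (two_mul_abs_sub_sum_abs_le_norm_sum_smul hv w l) 2

end Matrix

theorem stmt_5 {q : ℕ} (hq : 1 ≤ q) (w : Fin q → ℝ)
    (hw : ∀ i, w i = 2 ^ (i : ℕ)) :
    {x : ℝ | ∃ B : Matrix (Fin q) (Fin q) ℝ,
        B.PosSemidef ∧ (∀ i, B i i = 1) ∧ x = w ⬝ᵥ B.mulVec w} =
      Set.Icc 1 ((2 ^ q - 1) ^ 2) := by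
  obtain ⟨n, rfl⟩ : ∃ n, q = n + 1 := ⟨q - 1, by omega⟩
  have habs : ∀ i, |w i| = w i := fun i => abs_of_nonneg (by rw [hw]; positivity)
  have hsum : ∑ i, w i = 2 ^ (n + 1) - 1 := by
    simp only [hw, Fin.sum_univ_eq_sum_range (fun i => (2 : ℝ) ^ i),
      geom_sum_eq (by norm_num : (2 : ℝ) ≠ 1)]
    norm_num
  have hlast : 2 * w (Fin.last n) - ∑ i, w i = 1 := by
    rw [hsum, hw, Fin.val_last]
    ring
  have hS : {x : ℝ | ∃ B : Matrix (Fin (n + 1)) (Fin (n + 1)) ℝ,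
      B.PosSemidef ∧ (∀ i, B i i = 1) ∧ x = w ⬝ᵥ B.mulVec w} =
      (fun B => w ⬝ᵥ B *ᵥ w) '' elliptope (Fin (n + 1)) := by
    ext x
    simp [elliptope, and_assoc, eq_comm]
  rw [hS]
  refine Set.Subset.antisymm ?_ ?_
  · rintro _ ⟨B, hB, rfl⟩
    have hlo := le_dotProduct_mulVec_of_mem_elliptope hB w (Fin.last n)
    have hup := dotProduct_mulVec_le_of_mem_elliptope hB w
    simp only [habs] at hlo hup
    rw [hlast, one_pow] at hlo
    rw [hsum] at hup
    exact ⟨hlo (by linarith), hup⟩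
  · set u : Fin (n + 1) → ℝ := Pi.single (Fin.last n) 2 - 1
    have hu : ∀ i, u i * u i = 1 := fun i => by
      by_cases h : i = Fin.last n <;> norm_num [u, h]
    have huw : u ⬝ᵥ w = 1 := by
      simp only [u, sub_dotProduct, single_dotProduct, one_dotProduct, hlast]
    refine (convex_image_elliptope w).ordConnected.out ?_ ?_
    · simpa [huw] using sq_dotProduct_mem_image_elliptope hu w
    · simpa [one_dotProduct, hsum] using sq_dotProduct_mem_image_elliptope (s := 1) (by simp) w
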